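/- For every integer n, the product of the bicomplex Pell number BP(n) with its i-conjugate satisfies BP(n) · (BP(n))*_i = 2·(−Q(2n+3)·1 + P(2n+3)·j). -/

import Mathlib

open scoped TensorProduct

noncomputable def bi : ℂ ⊗[ℝ] ℂ := Complex.I ⊗ₜ[ℝ] 1
noncomputable def bj : ℂ ⊗[ℝ] ℂ := (1 : ℂ) ⊗ₜ[ℝ] Complex.I
noncomputable def bij : ℂ ⊗[ℝ] ℂ := Complex.I ⊗ₜ[ℝ] Complex.I

/-- The bicomplex Pell number `BP n = P n + P (n+1) i + P (n+2) j + P (n+3) ij`. -/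
noncomputable def BP (P : ℤ → ℤ) (n : ℤ) : ℂ ⊗[ℝ] ℂ :=
  (P n : ℝ) • (1 : ℂ ⊗[ℝ] ℂ) + (P (n + 1) : ℝ) • bi + (P (n + 2) : ℝ) • bj +
    (P (n + 3) : ℝ) • bij

/-- The i-conjugate of the bicomplex Pell number. -/
noncomputable def BPconjI (P : ℤ → ℤ) (n : ℤ) : ℂ ⊗[ℝ] ℂ :=
  (P n : ℝ) • (1 : ℂ ⊗[ℝ] ℂ) - (P (n + 1) : ℝ) • bi + (P (n + 2) : ℝ) • bj -
    (P (n + 3) : ℝ) • bij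

/-!
Writing `BP n = (a + c j) + (b + d j) i`, its i-conjugate is `(a + c j) - (b + d j) i`, so the
product is `(a + c j)² + (b + d j)² = (a² + b² - c² - d²) + 2 (a c + b d) j`. The two
coefficients are Pell numbers by the addition formula `P (m + k + 1) = P m P k + P (m+1) P (k+1)`,
together with `2 Q m = P (m + 2) - P (m - 2)`.
-/

theorem mul_conj_eq_of_mul_self_eq_neg_one {A : Type*} [CommRing A] [Algebra ℝ A] {i j : A}
    (hi : i * i = -1) (hj : j * j = -1) (a b c d : ℝ) :
    (a • 1 + b • i + c • j + d • (i * j)) * (a • 1 - b • i + c • j - d • (i * j)) =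
      (a ^ 2 + b ^ 2 - c ^ 2 - d ^ 2) • (1 : A) + (2 * (a * c + b * d)) • j := by
  simp only [Algebra.smul_def, mul_one, map_sub, map_add, map_mul, map_pow, map_ofNat]
  linear_combination (algebraMap ℝ A c ^ 2 + algebraMap ℝ A d ^ 2) * hj -
    (algebraMap ℝ A b + algebraMap ℝ A d * j) ^ 2 * hi

theorem bi_mul_bi : bi * bi = -1 := by
  rw [bi, Algebra.TensorProduct.tmul_mul_tmul, Complex.I_mul_I, one_mul, TensorProduct.neg_tmul,
    Algebra.TensorProduct.one_def]

theorem bj_mul_bj : bj * bj = -1 := by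
  rw [bj, Algebra.TensorProduct.tmul_mul_tmul, Complex.I_mul_I, one_mul, TensorProduct.tmul_neg,
    Algebra.TensorProduct.one_def]

theorem bi_mul_bj : bi * bj = bij := by
  rw [bi, bj, bij, Algebra.TensorProduct.tmul_mul_tmul, mul_one, one_mul]

def IsPellSeq (X : ℤ → ℤ) : Prop :=
  ∀ n : ℤ, X (n + 2) = 2 * X (n + 1) + X n

namespace IsPellSeq

variable {X Y : ℤ → ℤ}

theorem ext (hX : IsPellSeq X) (hY : IsPellSeq Y) (h0 : X 0 = Y 0) (h1 : X 1 = Y 1) :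
    X = Y := by
  suffices h : ∀ k : ℤ, X k = Y k ∧ X (k + 1) = Y (k + 1) from funext fun k => (h k).1
  intro k
  induction k using Int.induction_on with
  | zero => exact ⟨h0, h1⟩
  | succ k ih =>
    refine ⟨ih.2, ?_⟩
    rw [add_assoc, one_add_one_eq_two, hX, hY, ih.1, ih.2]
  | pred k ih =>
    have hX' := hX (-k - 1)
    have hY' := hY (-k - 1)
    rw [show (-k - 1 + 2 : ℤ) = -k + 1 by ring, show (-k - 1 + 1 : ℤ) = -k by ring] at hX' hY'
    rw [sub_add_cancel]
    exact ⟨by linarith [ih.1, ih.2], ih.1⟩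

theorem comp_add_const (hX : IsPellSeq X) (m : ℤ) : IsPellSeq fun k => X (k + m) := by
  intro k
  simpa only [add_right_comm _ m] using hX (k + m)

theorem add (hX : IsPellSeq X) (hY : IsPellSeq Y) : IsPellSeq (X + Y) := by
  intro k
  simp only [Pi.add_apply, hX k, hY k]
  ring

theorem sub (hX : IsPellSeq X) (hY : IsPellSeq Y) : IsPellSeq (X - Y) := by
  intro k
  simp only [Pi.sub_apply, hX k, hY k]
  ring

theorem const_mul (hX : IsPellSeq X) (c : ℤ) : IsPellSeq fun k => c * X k := by
  intro k
  simp only [hX k]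
  ring

end IsPellSeq

section Pell

variable {P : ℤ → ℤ}

theorem pell_add_add_one (hP : IsPellSeq P) (hP0 : P 0 = 0) (hP1 : P 1 = 1) (m k : ℤ) :
    P (m + k + 1) = P m * P k + P (m + 1) * P (k + 1) := by
  have hP2 : P 2 = 2 := by simpa [hP0, hP1] using hP 0
  have hshift : (fun k => P (m + k + 1)) = fun k => P m * P k + P (m + 1) * P (k + 1) := by
    refine IsPellSeq.ext ?_ ((hP.const_mul _).add ((hP.comp_add_const 1).const_mul _)) ?_ ?_
    · simpa only [add_comm m, add_assoc] using hP.comp_add_const (m + 1)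
    · simp [hP0, hP1]
    · simp only [hP1, hP2, add_assoc, one_add_one_eq_two, hP m]
      ring
  exact congrFun hshift k

theorem two_mul_pellLucas {Q : ℤ → ℤ} (hP : IsPellSeq P) (hP0 : P 0 = 0) (hP1 : P 1 = 1)
    (hQ : IsPellSeq Q) (hQ0 : Q 0 = 2) (hQ1 : Q 1 = 2) (m : ℤ) :
    2 * Q m = P (m + 2) - P (m - 2) := by
  have hP2 : P 2 = 2 := by simpa [hP0, hP1] using hP 0
  have hP3 : P 3 = 5 := by simpa [hP1, hP2] using hP 1
  have hPm1 : P (-1) = 1 := by have := hP (-1); norm_num [hP0, hP1] at this; omega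
  have hPm2 : P (-2) = -2 := by have := hP (-2); norm_num [hP0, hPm1] at this; omega
  have hseq : (fun m => 2 * Q m) = fun m => P (m + 2) - P (m - 2) :=
    IsPellSeq.ext (hQ.const_mul 2) ((hP.comp_add_const 2).sub (hP.comp_add_const (-2)))
      (by norm_num [hQ0, hP2, hPm2]) (by norm_num [hQ1, hP3, hPm1])
  exact congrFun hseq m

theorem pell_sq_add_sq (hP : IsPellSeq P) (hP0 : P 0 = 0) (hP1 : P 1 = 1) (n : ℤ) :
    P n ^ 2 + P (n + 1) ^ 2 = P (2 * n + 1) := by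
  rw [two_mul, pell_add_add_one hP hP0 hP1, sq, sq]

end Pell

theorem bicomplexPell_mul_conjI (P Q : ℤ → ℤ)
    (hP : ∀ n : ℤ, P (n + 2) = 2 * P (n + 1) + P n) (hP0 : P 0 = 0) (hP1 : P 1 = 1)
    (hQ : ∀ n : ℤ, Q (n + 2) = 2 * Q (n + 1) + Q n) (hQ0 : Q 0 = 2) (hQ1 : Q 1 = 2)
    (n : ℤ) :
    BP P n * BPconjI P n =
      (2 : ℝ) • ((-(Q (2 * n + 3)) : ℝ) • (1 : ℂ ⊗[ℝ] ℂ) +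
        (P (2 * n + 3) : ℝ) • bj) := by
  have hscalar :
      P n ^ 2 + P (n + 1) ^ 2 - P (n + 2) ^ 2 - P (n + 3) ^ 2 = 2 * -Q (2 * n + 3) := by
    have hhigh := pell_sq_add_sq hP hP0 hP1 (n + 2)
    rw [show n + 2 + 1 = n + 3 by ring, show 2 * (n + 2) + 1 = 2 * n + 3 + 2 by ring] at hhigh
    have hQP := two_mul_pellLucas hP hP0 hP1 hQ hQ0 hQ1 (2 * n + 3)
    rw [show 2 * n + 3 - 2 = 2 * n + 1 by ring] at hQP
    linarith [pell_sq_add_sq hP hP0 hP1 n]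
  have hj := pell_add_add_one hP hP0 hP1 n (n + 2)
  rw [show n + (n + 2) + 1 = 2 * n + 3 by ring, show n + 2 + 1 = n + 3 by ring] at hj
  rw [BP, BPconjI, ← bi_mul_bj, mul_conj_eq_of_mul_self_eq_neg_one bi_mul_bi bj_mul_bj,
    smul_add, smul_smul, smul_smul]
  congr 2
  · exact_mod_cast hscalar
  · exact_mod_cast congrArg (2 * ·) hj.symm
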